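/- Let k ≥ 2 and n ≥ 0 be integers and let f : ℍ → ℂ be a smooth function. Then for all τ = u+iv ∈ ℍ, the iterated Maass raising operator is given by R_{2−2k}^{n}(f)(τ) = Σ_{r=0}^{n} (−1)^r C(n,r) (2−2k+r)_{n−r} v^{r−n} (4π)^r 𝒟^r(f)(τ), where C(n,r) is the binomial coefficient and (a)_m = a(a+1)⋯(a+m−1) is the rising factorial. -/

import Mathlib

noncomputable section

open Complex Real Finset

/-- The upper half-plane, as a subset of `ℂ`. -/
def UpperHalf : Set ℂ := {z : ℂ | 0 < z.im}

/-- The holomorphic Wirtinger derivative `∂f/∂τ = (1/2)(∂f/∂u − i ∂f/∂v)`. -/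
def wirtinger (f : ℂ → ℂ) (τ : ℂ) : ℂ :=
  (1 / 2) * (fderiv ℝ f τ 1 - Complex.I * fderiv ℝ f τ Complex.I)

/-- The antiholomorphic Wirtinger derivative `∂f/∂τ̄ = (1/2)(∂f/∂u + i ∂f/∂v)`. -/
def wirtingerBar (f : ℂ → ℂ) (τ : ℂ) : ℂ :=
  (1 / 2) * (fderiv ℝ f τ 1 + Complex.I * fderiv ℝ f τ Complex.I)

/-- The Maass raising operator `R_κ(f) = 2i ∂f/∂τ + (κ/v) f`. -/
def raise (κ : ℤ) (f : ℂ → ℂ) (τ : ℂ) : ℂ :=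
  2 * Complex.I * wirtinger f τ + ((κ : ℂ) / (τ.im : ℂ)) * f τ

/-- Iterated Maass raising operator `R_κ^n = R_{κ+2(n−1)} ∘ ⋯ ∘ R_κ`. -/
def raiseIter (κ : ℤ) : ℕ → (ℂ → ℂ) → (ℂ → ℂ)
  | 0, f => f
  | n + 1, f => raise (κ + 2 * (n : ℤ)) (raiseIter κ n f)

/-- The flipping operator `𝔉_{2−2k}(f)(τ) = −(v^{2k−2}/(2k−2)!) conj(R_{2−2k}^{2k−2}(f)(τ))`. -/
def flipOp (k : ℕ) (f : ℂ → ℂ) (τ : ℂ) : ℂ :=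
  -(((τ.im : ℂ) ^ (2 * k - 2)) / ((2 * k - 2).factorial : ℂ)) *
    (starRingEnd ℂ) (raiseIter (2 - 2 * (k : ℤ)) (2 * k - 2) f τ)

/-- The weight `−2k` flipping operator `𝔉_{−2k}(f)(τ) = −(v^{2k}/(2k)!) conj(R_{−2k}^{2k}(f)(τ))`. -/
def flipOpNeg (k : ℕ) (f : ℂ → ℂ) (τ : ℂ) : ℂ :=
  -(((τ.im : ℂ) ^ (2 * k)) / ((2 * k).factorial : ℂ)) *
    (starRingEnd ℂ) (raiseIter (-(2 * (k : ℤ))) (2 * k) f τ)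

/-- The Bol-type operator `𝒟 = (1/(2πi)) ∂/∂τ`. -/
def bol (f : ℂ → ℂ) : ℂ → ℂ := fun τ => (1 / (2 * (π : ℂ) * Complex.I)) * wirtinger f τ

/-- Iterates `𝒟^r` of the Bol-type operator. -/
def bolIter (r : ℕ) (f : ℂ → ℂ) : ℂ → ℂ := bol^[r] f

/-- The shadow operator `ξ_{2−2k}(f)(τ) = 2i v^{2−2k} conj(∂f/∂τ̄(τ))`. -/
def xiOp (k : ℕ) (f : ℂ → ℂ) (τ : ℂ) : ℂ :=
  2 * Complex.I * (τ.im : ℂ) ^ ((2 : ℤ) - 2 * k) * (starRingEnd ℂ) (wirtingerBar f τ)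

/-- Integral binary quadratic forms `[a,b,c]` of discriminant `D`. -/
def QD (D : ℤ) : Type := {q : ℤ × ℤ × ℤ // q.2.1 ^ 2 - 4 * q.1 * q.2.2 = D}

/-- `Q(z,1) = a z² + b z + c`. -/
def qval (q : ℤ × ℤ × ℤ) (z : ℂ) : ℂ :=
  (q.1 : ℂ) * z ^ 2 + (q.2.1 : ℂ) * z + (q.2.2 : ℂ)

/-- `Q_τ = (a(u²+v²) + bu + c)/v`. -/
def qtau (q : ℤ × ℤ × ℤ) (τ : ℂ) : ℝ :=
  ((q.1 : ℝ) * (τ.re ^ 2 + τ.im ^ 2) + (q.2.1 : ℝ) * τ.re + (q.2.2 : ℝ)) / τ.im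

/-- The exceptional set `E_D`, the union of the geodesics `Q_τ = 0`. -/
def ED (D : ℤ) : Set ℂ := {τ : ℂ | ∃ q : QD D, qtau q.1 τ = 0}

/-- The incomplete beta function `β(x;r,s) = ∫₀ˣ t^{r−1}(1−t)^{s−1} dt`. -/
def betaInt (x r s : ℝ) : ℝ := ∫ t in (0 : ℝ)..x, t ^ (r - 1) * (1 - t) ^ (s - 1)

/-- The locally harmonic Maass form `𝓕_{1−k,D}` of Bringmann–Kane–Kohnen. -/
def FBKK (k : ℕ) (D : ℕ) (τ : ℂ) : ℂ :=
  (((D : ℝ) ^ ((1 : ℝ) / 2 - (k : ℝ)) / (2 * ((2 * k - 2).choose (k - 1) : ℝ) * π) : ℝ) : ℂ) *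
    ∑' q : QD (D : ℤ),
      ((Real.sign (qtau q.1 τ) : ℝ) : ℂ) * qval q.1 τ ^ (k - 1) *
        ((betaInt ((D : ℝ) * τ.im ^ 2 / (‖qval q.1 τ‖) ^ 2)
            ((k : ℝ) - 1 / 2) (1 / 2) : ℝ) : ℂ)

/-- The function `𝒢_{−k,D}` of Bringmann–Mono. -/
def GBM (k : ℕ) (D : ℕ) (τ : ℂ) : ℂ :=
  (1 / 2 : ℂ) *
    ∑' q : QD (D : ℤ),
      qval q.1 τ ^ k *
        ((betaInt ((D : ℝ) * τ.im ^ 2 / (‖qval q.1 τ‖) ^ 2)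
            ((k : ℝ) + 1 / 2) (1 / 2) : ℝ) : ℂ)

/-- The rising factorial `(a)_n = a(a+1)⋯(a+n−1)`. -/
def risingFactorial (a : ℤ) (n : ℕ) : ℤ := ∏ i ∈ Finset.range n, (a + (i : ℤ))



section Aux

lemma upperHalf_isOpen : IsOpen UpperHalf := isOpen_lt continuous_const Complex.continuous_im

lemma wirtinger_eq_of_hasFDerivAt {f : ℂ → ℂ} {L : ℂ →L[ℝ] ℂ} {τ : ℂ}
    (h : HasFDerivAt f L τ) : wirtinger f τ = (1/2) * (L 1 - Complex.I * L Complex.I) := by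
  rw [wirtinger, h.fderiv]

open Topology in
lemma wirtinger_congr {f g : ℂ → ℂ} {τ : ℂ} (h : f =ᶠ[𝓝 τ] g) :
    wirtinger f τ = wirtinger g τ := by
  rw [wirtinger, wirtinger, h.fderiv_eq]

lemma wirtinger_const_mul {f : ℂ → ℂ} {τ : ℂ} (c : ℂ) (hf : DifferentiableAt ℝ f τ) :
    wirtinger (fun σ => c * f σ) τ = c * wirtinger f τ := by
  rw [wirtinger, wirtinger, fderiv_const_mul hf c]
  simp only [ContinuousLinearMap.coe_smul', Pi.smul_apply, smul_eq_mul]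
  ring

lemma wirtinger_mul {f g : ℂ → ℂ} {τ : ℂ} (hf : DifferentiableAt ℝ f τ)
    (hg : DifferentiableAt ℝ g τ) :
    wirtinger (fun σ => f σ * g σ) τ = wirtinger f τ * g τ + f τ * wirtinger g τ := by
  rw [wirtinger, wirtinger, wirtinger, fderiv_fun_mul hf hg]
  simp only [ContinuousLinearMap.add_apply, ContinuousLinearMap.coe_smul', Pi.smul_apply,
    smul_eq_mul]
  ring

lemma wirtinger_sum {s : Finset ℕ} {F : ℕ → ℂ → ℂ} {τ : ℂ}
    (h : ∀ i ∈ s, DifferentiableAt ℝ (F i) τ) :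
    wirtinger (fun σ => ∑ i ∈ s, F i σ) τ = ∑ i ∈ s, wirtinger (F i) τ := by
  rw [wirtinger, fderiv_fun_sum h]
  simp only [wirtinger, ContinuousLinearMap.coe_sum', Finset.sum_apply, Finset.mul_sum,
    ← Finset.sum_sub_distrib]

lemma hasFDerivAt_im_zpow (m : ℤ) {τ : ℂ} (h : (τ.im : ℂ) ≠ 0) :
    HasFDerivAt (fun σ : ℂ => ((σ.im : ℂ)) ^ m)
      (((m : ℂ) * ((τ.im:ℂ)) ^ (m - 1)) • (Complex.ofRealCLM.comp Complex.imCLM)) τ := by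
  have h1 := (Complex.ofRealCLM.comp Complex.imCLM).hasFDerivAt (x := τ)
  have h2 : HasDerivAt (fun z : ℂ => z ^ m) ((m : ℂ) * (τ.im:ℂ) ^ (m - 1)) ((τ.im:ℂ)) :=
    hasDerivAt_zpow m _ (Or.inl h)
  have h3 := (h2.hasFDerivAt.restrictScalars ℝ).comp τ h1
  refine h3.congr_fderiv ?_
  ext w
  simp [mul_comm]

lemma differentiableAt_im_zpow (m : ℤ) {τ : ℂ} (h : (τ.im : ℂ) ≠ 0) :
    DifferentiableAt ℝ (fun σ : ℂ => ((σ.im : ℂ)) ^ m) τ :=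
  (hasFDerivAt_im_zpow m h).differentiableAt

lemma wirtinger_im_zpow (m : ℤ) {τ : ℂ} (h : (τ.im : ℂ) ≠ 0) :
    wirtinger (fun σ : ℂ => ((σ.im : ℂ)) ^ m) τ
      = -(Complex.I/2) * (m : ℂ) * ((τ.im:ℂ)) ^ (m-1) := by
  rw [wirtinger_eq_of_hasFDerivAt (hasFDerivAt_im_zpow m h)]
  simp
  ring

lemma contDiffOn_wirtinger {f : ℂ → ℂ} (hf : ContDiffOn ℝ (⊤ : ℕ∞) f UpperHalf) :
    ContDiffOn ℝ (⊤ : ℕ∞) (wirtinger f) UpperHalf := by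
  have h1 : ContDiffOn ℝ (⊤ : ℕ∞) (fderiv ℝ f) UpperHalf :=
    hf.fderiv_of_isOpen upperHalf_isOpen (by simp)
  exact contDiffOn_const.mul ((h1.clm_apply contDiffOn_const).sub
    (contDiffOn_const.mul (h1.clm_apply contDiffOn_const)))

lemma contDiffOn_bolIter {f : ℂ → ℂ} (hf : ContDiffOn ℝ (⊤ : ℕ∞) f UpperHalf) (r : ℕ) :
    ContDiffOn ℝ (⊤ : ℕ∞) (bolIter r f) UpperHalf := by
  induction r with
  | zero => simpa [bolIter] using hf
  | succ r ih =>
    rw [bolIter, Function.iterate_succ_apply']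
    exact contDiffOn_const.mul (contDiffOn_wirtinger ih)

lemma differentiableAt_bolIter {f : ℂ → ℂ} (hf : ContDiffOn ℝ (⊤ : ℕ∞) f UpperHalf) (r : ℕ)
    {τ : ℂ} (hτ : τ ∈ UpperHalf) : DifferentiableAt ℝ (bolIter r f) τ :=
  ((contDiffOn_bolIter hf r).differentiableOn (by simp)).differentiableAt
    (upperHalf_isOpen.mem_nhds hτ)

lemma wirtinger_bolIter (f : ℂ → ℂ) (r : ℕ) (τ : ℂ) :
    wirtinger (bolIter r f) τ = 2 * (π:ℂ) * Complex.I * bolIter (r+1) f τ := by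
  have hh : bolIter (r+1) f τ = (1 / (2 * (π : ℂ) * Complex.I)) * wirtinger (bolIter r f) τ := by
    rw [bolIter, Function.iterate_succ_apply']; rfl
  rw [hh]
  have hπ : (π:ℂ) ≠ 0 := Complex.ofReal_ne_zero.mpr Real.pi_ne_zero
  field_simp

/-- Auxiliary coefficient `b_r^{(n)} = (−1)^r C(n,r) (κ+r)_{n−r}`. -/
def bz (κ : ℤ) (n r : ℕ) : ℤ :=
  (-1) ^ r * (n.choose r : ℤ) * risingFactorial (κ + r) (n - r)

lemma risingFactorial_succ (a : ℤ) (m : ℕ) :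
    risingFactorial a (m+1) = risingFactorial a m * (a + m) := Finset.prod_range_succ _ _

lemma risingFactorial_succ' (a : ℤ) (m : ℕ) :
    risingFactorial a (m+1) = a * risingFactorial (a+1) m := by
  rw [risingFactorial, Finset.prod_range_succ']
  simp only [Nat.cast_zero, add_zero, mul_comm]
  congr 1
  refine Finset.prod_congr rfl fun i _ => ?_
  push_cast; ring

lemma bz_zero (κ : ℤ) (n : ℕ) : bz κ (n+1) 0 = (κ + n) * bz κ n 0 := by
  simp [bz, risingFactorial_succ]; ring

lemma bz_top (κ : ℤ) (n : ℕ) : bz κ n (n+1) = 0 := by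
  simp [bz, Nat.choose_succ_self]

lemma bz_succ (κ : ℤ) (n r : ℕ) :
    bz κ (n+1) (r+1) = (κ + n + r + 1) * bz κ n (r+1) - bz κ n r := by
  rcases lt_or_ge r n with hr | hr
  · obtain ⟨m, rfl⟩ : ∃ m, n = r + 1 + m := ⟨n - r - 1, by omega⟩
    have e1 : r + 1 + m + 1 - (r + 1) = m + 1 := by omega
    have e2 : r + 1 + m - (r + 1) = m := by omega
    have e3 : r + 1 + m - r = m + 1 := by omega
    have e5 : (r + 1 + m + 1).choose (r + 1)
        = (r + 1 + m).choose r + (r + 1 + m).choose (r + 1) := Nat.choose_succ_succ _ _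
    rw [bz, bz, bz, e1, e2, e3, e5]
    rw [risingFactorial_succ, risingFactorial_succ']
    have hc : ((r + 1 + m).choose (r+1) : ℤ) * (r+1) = ((r + 1 + m).choose r : ℤ) * (m+1) := by
      have hcc := Nat.choose_succ_right_eq (r + 1 + m) r
      have h4 : r + 1 + m - r = m + 1 := by omega
      rw [h4] at hcc
      exact_mod_cast congrArg (Nat.cast : ℕ → ℤ) hcc
    have e4 : κ + ((r + 1 : ℕ) : ℤ) = κ + r + 1 := by push_cast; ring
    rw [e4]
    push_cast
    linear_combination ((-1:ℤ)^r * risingFactorial (κ + r + 1) m) * hc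
  · rcases eq_or_lt_of_le hr with h | h
    · subst h
      simp [bz, Nat.choose_succ_self, Nat.choose_self, pow_succ, risingFactorial]
    · have h1 : n.choose (r+1) = 0 := Nat.choose_eq_zero_of_lt (by omega)
      have h2 : n.choose r = 0 := Nat.choose_eq_zero_of_lt h
      have h3 : (n+1).choose (r+1) = 0 := Nat.choose_eq_zero_of_lt (by omega)
      simp [bz, h1, h2, h3]

lemma sum_step (κ : ℤ) (n : ℕ) (A : ℕ → ℂ) :
    (∑ r ∈ range (n+1+1), (bz κ (n+1) r : ℂ) * A r)
      = (∑ r ∈ range (n+1), ((κ + n + r : ℤ) : ℂ) * (bz κ n r : ℂ) * A r)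
        - ∑ r ∈ range (n+1), (bz κ n r : ℂ) * A (r+1) := by
  have e2 : (∑ r ∈ range (n+1), ((κ + n + r : ℤ) : ℂ) * (bz κ n r : ℂ) * A r)
      = ∑ r ∈ range (n+1+1), ((κ + n + r : ℤ) : ℂ) * (bz κ n r : ℂ) * A r := by
    rw [Finset.sum_range_succ (fun r => ((κ + n + r : ℤ) : ℂ) * (bz κ n r : ℂ) * A r) (n+1)]
    rw [bz_top]
    simp
  rw [e2, Finset.sum_range_succ' (fun r => ((κ + n + r : ℤ) : ℂ) * (bz κ n r : ℂ) * A r) (n+1),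
    Finset.sum_range_succ' (fun r => (bz κ (n+1) r : ℂ) * A r) (n+1)]
  have hterm : ∀ r, (bz κ (n+1) (r+1) : ℂ) * A (r+1)
      = ((κ + n + (r+1) : ℤ) : ℂ) * (bz κ n (r+1) : ℂ) * A (r+1) - (bz κ n r : ℂ) * A (r+1) := by
    intro r
    rw [bz_succ]
    push_cast
    ring
  rw [Finset.sum_congr rfl fun r _ => hterm r, Finset.sum_sub_distrib]
  have h0 : (bz κ (n+1) 0 : ℂ) = ((κ + n : ℤ) : ℂ) * (bz κ n 0 : ℂ) := by
    rw [bz_zero]; push_cast; ring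
  rw [h0]
  push_cast
  ring

end Aux

/-- The iterated raising operator in terms of the Bol-type operator:
`R_{2−2k}^n(f) = Σ_{r=0}^n (−1)^r C(n,r) (2−2k+r)_{n−r} v^{r−n} (4π)^r 𝒟^r(f)`. -/
theorem raiseIter_eq_bol_sum (k : ℕ) (hk : 2 ≤ k) (n : ℕ) (f : ℂ → ℂ)
    (hf : ContDiffOn ℝ (⊤ : ℕ∞) f UpperHalf) (τ : ℂ) (hτ : 0 < τ.im) :
    raiseIter (2 - 2 * (k : ℤ)) n f τ
      = ∑ r ∈ Finset.range (n + 1),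
          (-1) ^ r * (n.choose r : ℂ) *
            ((risingFactorial (2 - 2 * (k : ℤ) + (r : ℤ)) (n - r) : ℤ) : ℂ) *
            (τ.im : ℂ) ^ ((r : ℤ) - (n : ℤ)) * (4 * (π : ℂ)) ^ r * bolIter r f τ := by
  have key : ∀ (n : ℕ) (τ : ℂ), 0 < τ.im →
      raiseIter (2 - 2*(k:ℤ)) n f τ
        = ∑ r ∈ Finset.range (n+1), (bz (2 - 2*(k:ℤ)) n r : ℂ) *
            ((τ.im:ℂ) ^ ((r:ℤ) - (n:ℤ)) * ((4*(π:ℂ))^r * bolIter r f τ)) := by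
    intro n
    induction n with
    | zero =>
      intro τ hτ
      simp [raiseIter, bolIter, bz, risingFactorial]
    | succ n ih =>
      intro τ hτ
      have hτU : τ ∈ UpperHalf := hτ
      have hv : (τ.im : ℂ) ≠ 0 := Complex.ofReal_ne_zero.mpr hτ.ne'
      set κ : ℤ := 2 - 2*(k:ℤ) with hκ
      have hEq : raiseIter κ n f =ᶠ[nhds τ] (fun σ => ∑ r ∈ Finset.range (n+1),
          (bz κ n r : ℂ) * ((σ.im:ℂ) ^ ((r:ℤ) - (n:ℤ)) * ((4*(π:ℂ))^r * bolIter r f σ))) :=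
        Filter.eventually_of_mem (upperHalf_isOpen.mem_nhds hτU) (fun σ hσ => ih σ hσ)
      have hdiff : ∀ r ∈ Finset.range (n+1), DifferentiableAt ℝ
          (fun σ => (bz κ n r : ℂ) *
            ((σ.im:ℂ) ^ ((r:ℤ) - (n:ℤ)) * ((4*(π:ℂ))^r * bolIter r f σ))) τ := by
        intro r _
        exact (differentiableAt_const _).mul ((differentiableAt_im_zpow _ hv).mul
          ((differentiableAt_const _).mul (differentiableAt_bolIter hf r hτU)))
      have hw : wirtinger (raiseIter κ n f) τ
          = ∑ r ∈ Finset.range (n+1), (bz κ n r : ℂ) *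
              (-(Complex.I/2) * (((r:ℤ) - (n:ℤ) : ℤ) : ℂ) * (τ.im:ℂ) ^ (((r:ℤ) - (n:ℤ)) - 1)
                  * ((4*(π:ℂ))^r * bolIter r f τ)
                + (τ.im:ℂ) ^ ((r:ℤ) - (n:ℤ))
                  * ((4*(π:ℂ))^r * (2*(π:ℂ)*Complex.I * bolIter (r+1) f τ))) := by
        rw [wirtinger_congr hEq, wirtinger_sum hdiff]
        refine Finset.sum_congr rfl fun r hr => ?_
        have hd1 : DifferentiableAt ℝ (fun σ : ℂ => (4*(π:ℂ))^r * bolIter r f σ) τ :=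
          (differentiableAt_const _).mul (differentiableAt_bolIter hf r hτU)
        rw [wirtinger_const_mul _ ((differentiableAt_im_zpow _ hv).fun_mul hd1),
          wirtinger_mul (differentiableAt_im_zpow _ hv) hd1,
          wirtinger_im_zpow _ hv,
          wirtinger_const_mul _ (differentiableAt_bolIter hf r hτU),
          wirtinger_bolIter]
        try push_cast
        try ring
      have hstep : raiseIter κ (n+1) f τ
          = 2*Complex.I*wirtinger (raiseIter κ n f) τ
            + (((κ + 2*(n:ℤ) : ℤ)):ℂ)/(τ.im:ℂ) * raiseIter κ n f τ := rfl
      rw [sum_step κ n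
        (fun r => (τ.im:ℂ) ^ ((r:ℤ) - ((n+1 : ℕ):ℤ)) * ((4*(π:ℂ))^r * bolIter r f τ))]
      rw [hstep, hw, ih τ hτ, Finset.mul_sum, Finset.mul_sum, ← Finset.sum_add_distrib,
        ← Finset.sum_sub_distrib]
      refine Finset.sum_congr rfl fun r hr => ?_
      have ez1 : ((r:ℤ) - (n:ℤ)) - 1 = (r:ℤ) - ((n+1 : ℕ):ℤ) := by push_cast; ring
      have ez2 : (((r:ℕ)+1 : ℕ):ℤ) - ((n+1 : ℕ):ℤ) = (r:ℤ) - (n:ℤ) := by push_cast; ring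
      have ez3 : (τ.im:ℂ) ^ ((r:ℤ) - (n:ℤ))
          = (τ.im:ℂ) ^ ((r:ℤ) - ((n+1 : ℕ):ℤ)) * (τ.im:ℂ) := by
        rw [← zpow_add_one₀ hv]
        congr 1
        push_cast; ring
      rw [ez1, ez2, ez3]
      field_simp
      push_cast
      linear_combination ((bz κ n r : ℂ) * (4:ℂ)^r * (π:ℂ)^r
          * (-(r:ℂ)*(bolIter r f τ) + (n:ℂ)*(bolIter r f τ)
              + 4*(π:ℂ)*(τ.im:ℂ)*(bolIter (r+1) f τ))) * Complex.I_sq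
  rw [key n τ hτ]
  refine Finset.sum_congr rfl fun r hr => ?_
  simp only [bz]
  push_cast
  try ring

end
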